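/- arXiv:2310.14145 — 3 statements merged into one kernel-verified Lean document; each statement's English description precedes it below -/
import Mathlib

section
/- The group G acts transitively on the n-th level of the binary rooted tree for every n ≥ 1; that is, for every n and every pair of words u, v ∈ {0,1}^n of length n there exists g ∈ G with g(u) = v. -/
namespace BVTree

/-- States of the automaton (generators, their inverses, and the identity). -/
inductive Q : Type
  | e | qa | qb | qc | qd | qa' | qb' | qc' | qd'
  deriving DecidableEq

open Q

/-- Output function of the automaton. -/
def Qout : Q → Bool → Bool
  | qa, x => !x
  | qa', x => !x
  | _, x => x

/-- Transition function of the automaton. -/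
def Qtrans : Q → Bool → Q
  | qa, false => qd
  | qa, true => e
  | qb, false => qa
  | qb, true => qc
  | qc, _ => qa
  | qd, false => e
  | qd, true => qb
  | qa', false => e
  | qa', true => qd'
  | qb', false => qa'
  | qb', true => qc'
  | qc', _ => qa'
  | qd', false => e
  | qd', true => qb'
  | e, _ => e

/-- The state corresponding to the inverse automorphism. -/
def Qinv : Q → Q
  | e => e
  | qa => qa' | qb => qb' | qc => qc' | qd => qd'
  | qa' => qa | qb' => qb | qc' => qc | qd' => qd

/-- The action of a state on finite binary words. -/
def act : Q → List Bool → List Bool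
  | _, [] => []
  | q, x :: w => Qout q x :: act (Qtrans q x) w

lemma act_inv (q : Q) : ∀ w, act (Qinv q) (act q w) = w := by
  intro w
  induction w generalizing q with
  | nil => rfl
  | cons x w ih =>
    have h1 : Qout (Qinv q) (Qout q x) = x := by cases q <;> cases x <;> rfl
    have h2 : Qtrans (Qinv q) (Qout q x) = Qinv (Qtrans q x) := by
      cases q <;> cases x <;> rfl
    simp [act, h1, h2, ih]

/-- The tree automorphism determined by a state of the automaton. -/
def aut (q : Q) : Equiv.Perm (List Bool) where
  toFun := act q
  invFun := act (Qinv q)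
  left_inv := act_inv q
  right_inv := by
    intro w
    have h : Qinv (Qinv q) = q := by cases q <;> rfl
    simpa [h] using act_inv (Qinv q) w

/-- The automorphism `a`: `a(0w) = 1·d(w)`, `a(1w) = 0·w`. -/
def a : Equiv.Perm (List Bool) := aut qa
/-- The automorphism `b`: `b(0w) = 0·a(w)`, `b(1w) = 1·c(w)`. -/
def b : Equiv.Perm (List Bool) := aut qb
/-- The automorphism `c`: `c(0w) = 0·a(w)`, `c(1w) = 1·a(w)`. -/
def c : Equiv.Perm (List Bool) := aut qc
/-- The automorphism `d`: `d(0w) = 0·w`, `d(1w) = 1·b(w)`. -/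
def d : Equiv.Perm (List Bool) := aut qd

/-- The group `G` generated by `a`, `b`, `c`, `d`. -/
def G : Subgroup (Equiv.Perm (List Bool)) := Subgroup.closure {a, b, c, d}


/-
A self-replicating group is level-transitive as soon as it is transitive on the first level:
to send `x·u` to `y·v`, first move `x` to `y` and then correct the tail by an element fixing
`y` whose section at `y` sends the new tail to `v`. For `G`, the generator `a` swaps the two
letters, and every element of `G` is a section at `1` (hence, after conjugating by `a`, also
at `0`) of an element of `G`, because `c`, `d`, `b`, `a²` have sections `a`, `b`, `c`, `d` at `1`.
-/

section SelfReplicating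

variable {α : Type*}

/-- The sections at `x` of the elements of `H` fixing `x`; `H` is self-replicating when
`H ≤ liftAt H x` for every letter `x`. -/
def liftAt (H : Subgroup (Equiv.Perm (List α))) (x : α) : Subgroup (Equiv.Perm (List α)) where
  carrier := {g | ∃ h ∈ H, ∀ w, h (x :: w) = x :: g w}
  one_mem' := ⟨1, H.one_mem, fun _ => rfl⟩
  mul_mem' := by
    rintro g₁ g₂ ⟨h₁, hh₁, e₁⟩ ⟨h₂, hh₂, e₂⟩
    refine ⟨h₁ * h₂, H.mul_mem hh₁ hh₂, fun w => ?_⟩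
    rw [Equiv.Perm.mul_apply, e₂, e₁]
    rfl
  inv_mem' := by
    rintro g ⟨h, hh, e⟩
    refine ⟨h⁻¹, H.inv_mem hh, fun w => ?_⟩
    rw [Equiv.Perm.inv_eq_iff_eq, e]
    exact congrArg (x :: ·) (g.apply_symm_apply w).symm

theorem exists_mem_apply_eq_of_le_liftAt (H : Subgroup (Equiv.Perm (List α)))
    (hrep : ∀ x, H ≤ liftAt H x)
    (hroot : ∀ x y (w : List α),
      ∃ g ∈ H, ∃ w', w'.length = w.length ∧ g (x :: w) = y :: w') :
    ∀ u v : List α, u.length = v.length → ∃ g ∈ H, g u = v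
  | [], [], _ => ⟨1, H.one_mem, rfl⟩
  | [], _ :: _, huv | _ :: _, [], huv => by simp at huv
  | x :: u, y :: v, huv => by
    obtain ⟨g₀, hg₀, u', hu', e₀⟩ := hroot x y u
    obtain ⟨g₁, hg₁, e₁⟩ :=
      exists_mem_apply_eq_of_le_liftAt H hrep hroot u' v (by simpa [hu'] using huv)
    obtain ⟨h, hh, e⟩ := hrep y hg₁
    exact ⟨h * g₀, H.mul_mem hh hg₀, by rw [Equiv.Perm.mul_apply, e₀, e, e₁]⟩

end SelfReplicating

lemma act_e : ∀ w, act e w = w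
  | [] => rfl
  | x :: w => congrArg (x :: ·) (act_e w)

lemma act_length (q : Q) : ∀ w, (act q w).length = w.length
  | [] => rfl
  | _ :: w => congrArg Nat.succ (act_length _ w)

lemma a_true (w : List Bool) : a (true :: w) = false :: w :=
  congrArg (false :: ·) (act_e w)

lemma a_inv_false (w : List Bool) : a⁻¹ (false :: w) = true :: w :=
  congrArg (true :: ·) (act_e w)

lemma a_mem_G : a ∈ G := Subgroup.subset_closure (by simp)
lemma b_mem_G : b ∈ G := Subgroup.subset_closure (by simp)
lemma c_mem_G : c ∈ G := Subgroup.subset_closure (by simp)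
lemma d_mem_G : d ∈ G := Subgroup.subset_closure (by simp)

lemma G_le_liftAt_true : G ≤ liftAt G true := by
  refine (Subgroup.closure_le _).2 ?_
  rintro g (rfl | rfl | rfl | rfl)
  · exact ⟨c, c_mem_G, fun _ => rfl⟩
  · exact ⟨d, d_mem_G, fun _ => rfl⟩
  · exact ⟨b, b_mem_G, fun _ => rfl⟩
  · refine ⟨a * a, mul_mem a_mem_G a_mem_G, fun w => ?_⟩
    rw [Equiv.Perm.mul_apply, a_true]
    rfl

lemma liftAt_true_le_liftAt_false : liftAt G true ≤ liftAt G false := by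
  rintro g ⟨h, hh, e⟩
  refine ⟨a * h * a⁻¹, mul_mem (mul_mem a_mem_G hh) (inv_mem a_mem_G), fun w => ?_⟩
  rw [Equiv.Perm.mul_apply, Equiv.Perm.mul_apply, a_inv_false, e, a_true]

lemma G_le_liftAt : ∀ x, G ≤ liftAt G x
  | true => G_le_liftAt_true
  | false => G_le_liftAt_true.trans liftAt_true_le_liftAt_false

lemma exists_mem_G_apply_cons_eq_cons (x y : Bool) (w : List Bool) :
    ∃ g ∈ G, ∃ w', w'.length = w.length ∧ g (x :: w) = y :: w' := by
  by_cases hxy : x = y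
  · exact ⟨1, one_mem G, w, rfl, by rw [hxy]; rfl⟩
  · obtain rfl : y = !x := by cases x <;> cases y <;> simp_all
    exact ⟨a, a_mem_G, act (Qtrans qa x) w, act_length _ w, rfl⟩

theorem level_transitive_general (n : ℕ) (u v : List Bool)
    (hu : u.length = n) (hv : v.length = n) :
    ∃ g ∈ G, g u = v :=
  exists_mem_apply_eq_of_le_liftAt G G_le_liftAt exists_mem_G_apply_cons_eq_cons u v
    (hu.trans hv.symm)

/-- `G` acts transitively on every level `n ≥ 1` of the binary rooted tree. -/
theorem level_transitive (n : ℕ) (hn : 1 ≤ n) (u v : List Bool)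
    (hu : u.length = n) (hv : v.length = n) :
    ∃ g ∈ G, g u = v :=
  level_transitive_general n u v hu hv

end BVTree
end

section
/- For every k ≥ 1, the commutator [a, c^{-2^k}] = a⁻¹·c^{2^k}·a·c^{-2^k} is a nontrivial element of the rigid stabilizer Rist_G((0111)^k) of the vertex (0111)^k, the word of length 4k obtained by concatenating k copies of 0111; that is, [a, c^{-2^k}] ≠ 1 and [a, c^{-2^k}] fixes every word that does not have (0111)^k as a prefix. -/
namespace BVTree

open Q

/-!
A permutation of the tree is described by its wreath recursion: what it does to the first letter
and its sections below. For the commutators `⁅f, g⁆` of this family, `g` fixes the first level, and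
then the section of `⁅f, g⁆` at a letter is the commutator of the sections of `f` and `g` there.
Starting from `⁅a⁻¹, c ^ (2 * m)⁆` and descending along `0111`, the sections run through
`⁅d⁻¹, a ^ (2 * m)⁆`, `⁅b⁻¹, d ^ m⁆`, `⁅c⁻¹, b ^ m⁆` and back to `⁅a⁻¹, c ^ m⁆`, while every section
leaving this path is trivial. Halving the exponent `k` times, `⁅a⁻¹, c ^ 2 ^ k⁆` is supported below
`(0111)^k` and acts there as `⁅a⁻¹, c⁆`, which moves `0000`.
-/

open Equiv

open scoped commutatorElement

section Sections

variable {α : Type*} {f g f₁ g₁ h : Perm (List α)} {u u' v v' v'' : List α}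

def HasSection (f : Perm (List α)) (v v' : List α) (g : Perm (List α)) : Prop :=
  ∀ w, f (v ++ w) = v' ++ g w

theorem HasSection.mul (hf : HasSection f v' v'' f₁) (hg : HasSection g v v' g₁) :
    HasSection (f * g) v v'' (f₁ * g₁) := fun w => by
  rw [Perm.mul_apply, hg, hf, Perm.mul_apply]

theorem HasSection.inv (hf : HasSection f v v' f₁) : HasSection f⁻¹ v' v f₁⁻¹ := fun w =>
  f.injective (by rw [hf]; simp only [Perm.coe_inv, apply_symm_apply])

theorem HasSection.pow (hf : HasSection f v v f₁) (n : ℕ) : HasSection (f ^ n) v v (f₁ ^ n) := by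
  induction n with
  | zero => intro w; rfl
  | succ n ih => simpa only [pow_succ] using ih.mul hf

theorem HasSection.append (hf : HasSection f v v' g) (hg : HasSection g u u' h) :
    HasSection f (v ++ u) (v' ++ u') h := fun w => by
  rw [List.append_assoc, hf, hg, List.append_assoc]

theorem HasSection.commutatorElement (hf : HasSection f v v' f₁) (hgv : HasSection g v v g₁)
    (hgv' : HasSection g v' v' g₁) : HasSection ⁅f, g⁆ v' v' ⁅f₁, g₁⁆ := by
  simpa only [commutatorElement_def] using ((hf.mul hgv).mul hf.inv).mul hgv'.inv

theorem eq_one_of_hasSection_one (h : HasSection 1 v v g) : g = 1 :=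
  Perm.ext fun w => List.append_cancel_left (h w).symm

theorem apply_nil_of_hasSection (h : ∀ x, ∃ y g, HasSection f [x] [y] g) : f [] = [] := by
  have hf : f (f⁻¹ []) = [] := f.apply_symm_apply []
  rcases hu : f⁻¹ [] with _ | ⟨x, w⟩
  · rwa [hu] at hf
  · obtain ⟨y, g, hxy⟩ := h x
    rw [hu, ← List.singleton_append, hxy] at hf
    exact absurd hf (List.cons_ne_nil _ _)

def IsSupportedBelow (v : List α) (f : Perm (List α)) : Prop :=
  ∀ u, ¬ v <+: u → f u = u

theorem isSupportedBelow_nil (f : Perm (List α)) : IsSupportedBelow [] f :=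
  fun u hu => absurd (List.nil_prefix (l := u)) hu

theorem IsSupportedBelow.cons {y : α} (hg : IsSupportedBelow v g) (hy : HasSection f [y] [y] g)
    (hx : ∀ x ≠ y, HasSection f [x] [x] 1) : IsSupportedBelow (y :: v) f := by
  rintro (_ | ⟨x, w⟩) hu
  · refine apply_nil_of_hasSection fun x => ?_
    by_cases hxy : x = y
    · exact ⟨y, g, hxy ▸ hy⟩
    · exact ⟨x, 1, hx x hxy⟩
  · by_cases hxy : x = y
    · subst hxy
      have hw : ¬ v <+: w := fun h => hu (List.cons_prefix_cons.mpr ⟨rfl, h⟩)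
      exact (hy w).trans (congrArg (x :: ·) (hg w hw))
    · exact hx x hxy w

end Sections

theorem aut_hasSection (q : Q) (x : Bool) :
    HasSection (aut q) [x] [Qout q x] (aut (Qtrans q x)) := fun _ => rfl

theorem aut_e : aut e = 1 := by
  ext w : 1
  induction w with
  | nil => rfl
  | cons x w ih => exact congrArg (x :: ·) ih

theorem hasSection_a_false : HasSection a [false] [true] d := aut_hasSection qa false
theorem hasSection_a_true : HasSection a [true] [false] 1 := aut_e ▸ aut_hasSection qa true
theorem hasSection_b_false : HasSection b [false] [false] a := aut_hasSection qb false
theorem hasSection_b_true : HasSection b [true] [true] c := aut_hasSection qb true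
theorem hasSection_c (x : Bool) : HasSection c [x] [x] a := by
  cases x <;> exact aut_hasSection qc _
theorem hasSection_d_false : HasSection d [false] [false] 1 := aut_e ▸ aut_hasSection qd false
theorem hasSection_d_true : HasSection d [true] [true] b := aut_hasSection qd true

theorem hasSection_a_sq (x : Bool) : HasSection (a ^ 2) [x] [x] d := by
  rw [pow_two]
  cases x
  · simpa only [one_mul] using hasSection_a_true.mul hasSection_a_false
  · simpa only [mul_one] using hasSection_a_false.mul hasSection_a_true

theorem hasSection_inv_a_c_pow_true (n : ℕ) : HasSection ⁅a⁻¹, c ^ n⁆ [true] [true] 1 := by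
  simpa only [inv_one, commutatorElement_one_left] using
    hasSection_a_true.inv.commutatorElement ((hasSection_c false).pow n)
      ((hasSection_c true).pow n)

theorem hasSection_inv_a_c_pow_false (n : ℕ) :
    HasSection ⁅a⁻¹, c ^ n⁆ [false] [false] ⁅d⁻¹, a ^ n⁆ :=
  hasSection_a_false.inv.commutatorElement ((hasSection_c true).pow n)
    ((hasSection_c false).pow n)

theorem hasSection_inv_d_a_pow_false (m : ℕ) :
    HasSection ⁅d⁻¹, a ^ (2 * m)⁆ [false] [false] 1 := by
  simpa only [inv_one, commutatorElement_one_left, pow_mul] using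
    hasSection_d_false.inv.commutatorElement ((hasSection_a_sq false).pow m)
      ((hasSection_a_sq false).pow m)

theorem hasSection_inv_d_a_pow_true (m : ℕ) :
    HasSection ⁅d⁻¹, a ^ (2 * m)⁆ [true] [true] ⁅b⁻¹, d ^ m⁆ := by
  simpa only [pow_mul] using hasSection_d_true.inv.commutatorElement
    ((hasSection_a_sq true).pow m) ((hasSection_a_sq true).pow m)

theorem hasSection_inv_b_d_pow_false (m : ℕ) : HasSection ⁅b⁻¹, d ^ m⁆ [false] [false] 1 := by
  simpa only [one_pow, commutatorElement_one_right] using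
    hasSection_b_false.inv.commutatorElement (hasSection_d_false.pow m) (hasSection_d_false.pow m)

theorem hasSection_inv_b_d_pow_true (m : ℕ) :
    HasSection ⁅b⁻¹, d ^ m⁆ [true] [true] ⁅c⁻¹, b ^ m⁆ :=
  hasSection_b_true.inv.commutatorElement (hasSection_d_true.pow m) (hasSection_d_true.pow m)

theorem hasSection_inv_c_b_pow_false (m : ℕ) : HasSection ⁅c⁻¹, b ^ m⁆ [false] [false] 1 := by
  have hcomm : ⁅a⁻¹, a ^ m⁆ = 1 :=
    commutatorElement_eq_one_iff_commute.mpr ((Commute.refl a).inv_left.pow_right m)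
  simpa only [hcomm] using (hasSection_c false).inv.commutatorElement
    (hasSection_b_false.pow m) (hasSection_b_false.pow m)

theorem hasSection_inv_c_b_pow_true (m : ℕ) :
    HasSection ⁅c⁻¹, b ^ m⁆ [true] [true] ⁅a⁻¹, c ^ m⁆ :=
  (hasSection_c true).inv.commutatorElement (hasSection_b_true.pow m) (hasSection_b_true.pow m)

theorem isSupportedBelow_inv_a_c_pow_two_mul {v : List Bool} {m : ℕ}
    (h : IsSupportedBelow v ⁅a⁻¹, c ^ m⁆) :
    IsSupportedBelow ([false, true, true, true] ++ v) ⁅a⁻¹, c ^ (2 * m)⁆ := by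
  have h₃ := h.cons (hasSection_inv_c_b_pow_true m) fun x hx => by
    cases x; exacts [hasSection_inv_c_b_pow_false m, absurd rfl hx]
  have h₂ := h₃.cons (hasSection_inv_b_d_pow_true m) fun x hx => by
    cases x; exacts [hasSection_inv_b_d_pow_false m, absurd rfl hx]
  have h₁ := h₂.cons (hasSection_inv_d_a_pow_true m) fun x hx => by
    cases x; exacts [hasSection_inv_d_a_pow_false m, absurd rfl hx]
  exact h₁.cons (hasSection_inv_a_c_pow_false _) fun x hx => by
    cases x; exacts [absurd rfl hx, hasSection_inv_a_c_pow_true _]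

theorem hasSection_inv_a_c_pow_two_mul (m : ℕ) :
    HasSection ⁅a⁻¹, c ^ (2 * m)⁆ [false, true, true, true] [false, true, true, true]
      ⁅a⁻¹, c ^ m⁆ :=
  (((hasSection_inv_a_c_pow_false _).append (hasSection_inv_d_a_pow_true m)).append
    (hasSection_inv_b_d_pow_true m)).append (hasSection_inv_c_b_pow_true m)

theorem isSupportedBelow_inv_a_c_pow_two_pow (k : ℕ) :
    IsSupportedBelow (List.replicate k [false, true, true, true]).flatten ⁅a⁻¹, c ^ 2 ^ k⁆ := by
  induction k with
  | zero => exact isSupportedBelow_nil _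
  | succ k ih =>
    rw [pow_succ', List.replicate_succ, List.flatten_cons]
    exact isSupportedBelow_inv_a_c_pow_two_mul ih

theorem hasSection_inv_a_c_pow_two_pow (k : ℕ) :
    HasSection ⁅a⁻¹, c ^ 2 ^ k⁆ (List.replicate k [false, true, true, true]).flatten
      (List.replicate k [false, true, true, true]).flatten ⁅a⁻¹, c⁆ := by
  induction k with
  | zero => exact fun _ => rfl
  | succ k ih =>
    rw [pow_succ', List.replicate_succ, List.flatten_cons]
    exact (hasSection_inv_a_c_pow_two_mul _).append ih

theorem inv_a_c_ne_one : ⁅a⁻¹, c⁆ ≠ 1 := fun h => by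
  have hmove : ⁅a⁻¹, c⁆ [false, false, false, false] = [false, false, false, true] := by decide
  simp [h] at hmove

theorem commutator_in_rist_iterated_general (k : ℕ) :
    (a⁻¹ * c ^ (2 ^ k) * a * (c ^ (2 ^ k))⁻¹ ≠ 1) ∧
    (∀ u : List Bool, ¬ ((List.replicate k [false, true, true, true]).flatten <+: u) →
      (a⁻¹ * c ^ (2 ^ k) * a * (c ^ (2 ^ k))⁻¹) u = u) := by
  have hcomm : a⁻¹ * c ^ (2 ^ k) * a * (c ^ (2 ^ k))⁻¹ = ⁅a⁻¹, c ^ 2 ^ k⁆ := by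
    rw [commutatorElement_def, inv_inv]
  rw [hcomm]
  refine ⟨fun h => inv_a_c_ne_one ?_, isSupportedBelow_inv_a_c_pow_two_pow k⟩
  exact eq_one_of_hasSection_one (h ▸ hasSection_inv_a_c_pow_two_pow k)

/-- for `k ≥ 1`, the commutator `[a, c^{-2^k}]` is a nontrivial element of the
rigid stabilizer of the vertex `(0111)^k`. -/
theorem commutator_in_rist_iterated (k : ℕ) (hk : 1 ≤ k) :
    (a⁻¹ * c ^ (2 ^ k) * a * (c ^ (2 ^ k))⁻¹ ≠ 1) ∧
    (∀ u : List Bool, ¬ ((List.replicate k [false, true, true, true]).flatten <+: u) →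
      (a⁻¹ * c ^ (2 ^ k) * a * (c ^ (2 ^ k))⁻¹) u = u) :=
  commutator_in_rist_iterated_general k

end BVTree
end

section
/- The automaton generating G has exponential growth of activity: there exist constants C > 0 and λ > 1 such that for every n ≥ 1 the number of words v ∈ {0,1}^n of length n with a|_v ≠ 1 is at least C·λⁿ. -/
namespace BVTree

open Q

/-!
Reading `0`, `1`, `1`, `x` from the state `a` passes through `d`, `b`, `c` and returns to `a`, for
either letter `x`. So each of the `2 ^ k` words made of `k` such blocks has section `a`, and
extending it by a prefix of `011` to length `n = 4k + r` gives a section among `a, d, b, c`, none of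
which is trivial. Hence at least `2 ^ ⌊n / 4⌋ ≥ ½ (2 ^ (1/4)) ^ n` words of length `n` are active.
-/

/-- The section `q|_v`, as a state of the automaton. -/
def stateAfter (q : Q) (v : List Bool) : Q := v.foldl Qtrans q

lemma stateAfter_append (q : Q) (v w : List Bool) :
    stateAfter q (v ++ w) = stateAfter (stateAfter q v) w :=
  List.foldl_append

lemma stateAfter_flatMap_of_forall_eq {α : Type*} {q : Q} {f : α → List Bool}
    (hf : ∀ x, stateAfter q (f x) = q) (s : List α) : stateAfter q (s.flatMap f) = q := by
  induction s with
  | nil => rfl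
  | cons x s ih => rw [List.flatMap_cons, stateAfter_append, hf, ih]

lemma act_append (q : Q) (v w : List Bool) :
    act q (v ++ w) = act q v ++ act (stateAfter q v) w := by
  induction v generalizing q with
  | nil => rfl
  | cons x v ih => simp [act, ih, stateAfter]

lemma exists_act_ne_of_ne_e {q : Q} (hq : q ≠ e) : ∃ w, act q w ≠ w := by
  cases q with
  | e => exact absurd rfl hq
  | qa | qa' => exact ⟨[false], by decide⟩
  | qb | qb' | qc | qc' => exact ⟨[false, false], by decide⟩
  | qd | qd' => exact ⟨[true, false, false], by decide⟩

lemma exists_aut_append_ne {q : Q} {v : List Bool} (h : stateAfter q v ≠ e) :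
    ∃ w, aut q (v ++ w) ≠ aut q v ++ w := by
  obtain ⟨w, hw⟩ := exists_act_ne_of_ne_e h
  refine ⟨w, ?_⟩
  change act q (v ++ w) ≠ act q v ++ w
  simpa [act_append] using hw

lemma flatMap_injective_of_length_eq {α β : Type*} {f : α → List β} {m : ℕ} (hm : 0 < m)
    (hf : Function.Injective f) (hlen : ∀ x, (f x).length = m) :
    Function.Injective fun s : List α => s.flatMap f := by
  intro s t hst
  induction s generalizing t with
  | nil => cases t <;> simp_all [← List.length_eq_zero_iff, hm.ne']
  | cons x s ih =>
    cases t with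
    | nil => simp_all [← List.length_eq_zero_iff, hm.ne']
    | cons y t =>
      obtain ⟨hxy, hst⟩ := List.append_inj (by simpa using hst) (by rw [hlen, hlen])
      rw [hf hxy, ih hst]

def loopWord (s : List Bool) : List Bool := s.flatMap fun x => [false, true, true, x]

lemma length_loopWord (s : List Bool) : (loopWord s).length = 4 * s.length := by
  simp [loopWord, List.length_flatMap, mul_comm]

lemma loopWord_injective : Function.Injective loopWord :=
  flatMap_injective_of_length_eq (m := 4) (by norm_num) (fun _ _ h => by simpa using h)
    fun _ => rfl

lemma stateAfter_qa_loopWord (s : List Bool) : stateAfter qa (loopWord s) = qa :=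
  stateAfter_flatMap_of_forall_eq (by decide) s

lemma stateAfter_qa_take_ne_e {r : ℕ} (hr : r ≤ 3) :
    stateAfter qa ([false, true, true].take r) ≠ e := by
  interval_cases r <;> decide

lemma two_pow_le_card_active (k r : ℕ) (hr : r ≤ 3) :
    2 ^ k ≤ Nat.card {v : List Bool // v.length = 4 * k + r ∧
      ∃ w : List Bool, a (v ++ w) ≠ a v ++ w} := by
  have : Finite {v : List Bool // v.length = 4 * k + r ∧ ∃ w : List Bool, a (v ++ w) ≠ a v ++ w} :=
    ((List.finite_length_eq Bool _).subset fun _ hv => hv.1).to_subtype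
  let pad := [false, true, true].take r
  have hpad : pad.length = r := by simpa [pad] using hr
  let F (s : List.Vector Bool k) :
      {v : List Bool // v.length = 4 * k + r ∧ ∃ w : List Bool, a (v ++ w) ≠ a v ++ w} :=
    ⟨loopWord s.1 ++ pad, by simp [length_loopWord, hpad],
      exists_aut_append_ne (by
        rw [stateAfter_append, stateAfter_qa_loopWord]; exact stateAfter_qa_take_ne_e hr)⟩
  have hF : Function.Injective F := fun s t hst =>
    Subtype.ext <| loopWord_injective <|
      List.append_inj_left (congrArg Subtype.val hst) (by simp [length_loopWord])
  simpa [Nat.card_eq_fintype_card, card_vector] using Nat.card_le_card_of_injective F hF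

lemma rpow_inv_natCast_pow_le {x : ℝ} (hx : 1 ≤ x) (m n : ℕ) (hm : 0 < m) :
    (x ^ (m : ℝ)⁻¹) ^ n ≤ x * x ^ (n / m) := by
  have hnm : (n : ℝ) ≤ m * ((n / m : ℕ) + 1) := by
    exact_mod_cast (Nat.lt_mul_div_succ n hm).le
  calc (x ^ (m : ℝ)⁻¹) ^ n = x ^ ((m : ℝ)⁻¹ * n) := by
        rw [← Real.rpow_natCast, ← Real.rpow_mul (by linarith)]
    _ ≤ x ^ (((n / m : ℕ) + 1 : ℕ) : ℝ) := by
        refine Real.rpow_le_rpow_of_exponent_le hx ?_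
        rw [inv_mul_le_iff₀ (by exact_mod_cast hm)]
        exact_mod_cast hnm
    _ = x * x ^ (n / m) := by rw [Real.rpow_natCast, pow_succ']

/-- exponential growth of activity: the number of words `v` of length `n`
at which the section of `a` is nontrivial grows at least like `C·λⁿ` for some `C > 0`,
`λ > 1`. -/
theorem exponential_activity :
    ∃ C lam : ℝ, 0 < C ∧ 1 < lam ∧ ∀ n : ℕ, 1 ≤ n →
      C * lam ^ n ≤
        (Nat.card {v : List Bool // v.length = n ∧
          ∃ w : List Bool, a (v ++ w) ≠ a v ++ w} : ℝ) := by
  refine ⟨1 / 2, 2 ^ (4 : ℝ)⁻¹, by norm_num, Real.one_lt_rpow (by norm_num) (by norm_num),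
    fun n _ => ?_⟩
  have hcard := two_pow_le_card_active (n / 4) (n % 4) (by omega)
  rw [Nat.div_add_mod] at hcard
  calc 1 / 2 * ((2 : ℝ) ^ (4 : ℝ)⁻¹) ^ n ≤ 2 ^ (n / 4) := by
        linarith [rpow_inv_natCast_pow_le (x := 2) (by norm_num) 4 n (by norm_num)]
    _ ≤ _ := by exact_mod_cast hcard

end BVTree
end
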